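/- Let $(E,\sqsubseteq)$ be a lattice and $\Phi : E \to E$ monotone. For $u \in E$, define $\Psi_u(v) = \Phi(v) \sqcap u$ and $\Psi(v) = \Phi(v) \sqcap v$. Then for every natural number $k \ge 0$, $\Psi_u^k(u) = \Psi^k(u)$; that is, the two sequences of iterates starting at $u$ coincide. -/
import Mathlib


theorem stmt_5 {E : Type*} [Lattice E] (Φ : E → E) (hΦ : Monotone Φ) (u : E) :
    ∀ k : ℕ, (fun v => Φ v ⊓ u)^[k] u = (fun v => Φ v ⊓ v)^[k] u := by
  set Ψ : E → E := fun v => Φ v ⊓ v with hΨ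
  have key : ∀ k : ℕ, Φ (Ψ^[k] u) ⊓ u = Φ (Ψ^[k] u) ⊓ (Ψ^[k] u) := by
    intro k
    induction k with
    | zero => simp
    | succ k ih =>
      have hstep : Ψ^[k+1] u = Φ (Ψ^[k] u) ⊓ (Ψ^[k] u) := by
        rw [Function.iterate_succ_apply']
      have hle : Ψ^[k+1] u ≤ Ψ^[k] u := by
        rw [hstep]; exact inf_le_right
      have hΦle : Φ (Ψ^[k+1] u) ≤ Φ (Ψ^[k] u) := hΦ hle
      calc Φ (Ψ^[k+1] u) ⊓ u
          = Φ (Ψ^[k+1] u) ⊓ (Φ (Ψ^[k] u) ⊓ u) := by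
            rw [← inf_assoc, inf_eq_left.mpr hΦle]
        _ = Φ (Ψ^[k+1] u) ⊓ (Φ (Ψ^[k] u) ⊓ (Ψ^[k] u)) := by rw [ih]
        _ = Φ (Ψ^[k+1] u) ⊓ (Ψ^[k+1] u) := by rw [← hstep]
  intro k
  induction k with
  | zero => rfl
  | succ k ih =>
    rw [Function.iterate_succ_apply', Function.iterate_succ_apply', ih]
    exact key k
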